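/- Let R be an alternative ring that is not associative (there exist a, b, c in R with (a,b,c) ≠ 0). Assume that no non-zero element of the nucleus N is a left zero divisor in R. Then N is commutative: m*n = n*m for all m, n in N. -/

import Mathlib

/-!
In an alternative ring the associator is alternating, and a left nuclear element `n` is then
nuclear in every position. Moving `n` around the associator with these two facts shows that `n`
commutes with every associator. Hence for nuclear `m`, `n` and a nonzero associator
`A = (x, y, z)`, using `n * A = (n * x, y, z)`,
`(m * n) * A = m * (n * x, y, z) = (n * x, y, z) * m = n * (A * m) = (n * m) * A`,
so the nuclear element `m * n - n * m` annihilates `A` and must vanish.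
-/

def IsLeftAlternative (R : Type*) [Mul R] : Prop := ∀ x y : R, x * x * y = x * (x * y)

def IsRightAlternative (R : Type*) [Mul R] : Prop := ∀ x y : R, y * x * x = y * (x * x)

def IsLeftNuclear {R : Type*} [Mul R] (n : R) : Prop := ∀ x y : R, n * x * y = n * (x * y)

section Associator

variable {R : Type*} [NonUnitalNonAssocRing R]

theorem associator_swap_left (hl : IsLeftAlternative R) (x y z : R) :
    associator y x z = -associator x y z := by
  have h := hl (x + y) z
  simp only [associator_apply, add_mul, mul_add] at h ⊢
  linear_combination (norm := abel1) h - hl x z - hl y z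

theorem associator_swap_right (hr : IsRightAlternative R) (x y z : R) :
    associator x z y = -associator x y z := by
  have h := hr (y + z) x
  simp only [associator_apply, add_mul, mul_add] at h ⊢
  linear_combination (norm := abel1) h - hr y x - hr z x

theorem associator_cyclic (hl : IsLeftAlternative R) (hr : IsRightAlternative R) (x y z : R) :
    associator y z x = associator x y z := by
  rw [← neg_neg (associator x y z), ← associator_swap_left hl, ← associator_swap_right hr]

namespace IsLeftNuclear

variable {m n : R}

theorem mul (hm : IsLeftNuclear m) (hn : IsLeftNuclear n) : IsLeftNuclear (m * n) := by
  intro x y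
  rw [hm n x, hm (n * x) y, hn x y, ← hm n (x * y)]

theorem sub (hm : IsLeftNuclear m) (hn : IsLeftNuclear n) : IsLeftNuclear (m - n) := by
  intro x y
  rw [sub_mul, sub_mul, hm x y, hn x y, sub_mul]

theorem associator_eq_zero (hn : IsLeftNuclear n) (x y : R) : associator n x y = 0 :=
  sub_eq_zero.mpr (hn x y)

theorem associator_mul_left (hn : IsLeftNuclear n) (x y z : R) :
    associator (n * x) y z = n * associator x y z := by
  rw [associator_apply, associator_apply, hn x y, hn (x * y) z, hn x (y * z), mul_sub]

theorem mid_assoc (hl : IsLeftAlternative R) (hn : IsLeftNuclear n) (x y : R) :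
    x * n * y = x * (n * y) := by
  rw [← sub_eq_zero, ← associator_apply, associator_swap_left hl, hn.associator_eq_zero, neg_zero]

theorem right_assoc (hl : IsLeftAlternative R) (hr : IsRightAlternative R)
    (hn : IsLeftNuclear n) (x y : R) : x * y * n = x * (y * n) := by
  rw [← sub_eq_zero, ← associator_apply, associator_cyclic hl hr n x y, hn.associator_eq_zero]

theorem associator_mul_right (hl : IsLeftAlternative R) (hr : IsRightAlternative R)
    (hn : IsLeftNuclear n) (x y z : R) :
    associator x y (z * n) = associator x y z * n := by
  simp only [associator_apply, sub_mul, hn.right_assoc hl hr]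

theorem associator_mul_mid (hl : IsLeftAlternative R) (hn : IsLeftNuclear n) (x y z : R) :
    associator y (n * x) z = associator (y * n) x z := by
  rw [associator_apply, associator_apply, ← hn.mid_assoc hl y x, hn x z,
    ← hn.mid_assoc hl y (x * z)]

theorem commute_associator (hl : IsLeftAlternative R) (hr : IsRightAlternative R)
    (hn : IsLeftNuclear n) (x y z : R) : Commute n (associator x y z) :=
  calc n * associator x y z = associator (n * x) y z := (hn.associator_mul_left x y z).symm
    _ = -associator (y * n) x z := by
      rw [associator_swap_left hl y (n * x), hn.associator_mul_mid hl]
    _ = -associator x z (y * n) := by rw [associator_cyclic hl hr (y * n) x z]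
    _ = associator x y z * n := by
      rw [hn.associator_mul_right hl hr, associator_swap_right hr, neg_mul, neg_neg]

theorem commutator_mul_associator (hl : IsLeftAlternative R) (hr : IsRightAlternative R)
    (hm : IsLeftNuclear m) (hn : IsLeftNuclear n) (x y z : R) :
    (m * n - n * m) * associator x y z = 0 := by
  set A := associator x y z
  have : m * n * A = n * m * A :=
    calc m * n * A = m * associator (n * x) y z := by rw [hm n A, hn.associator_mul_left]
      _ = associator (n * x) y z * m := (hm.commute_associator hl hr _ _ _).eq
      _ = n * (m * A) := by
        rw [hn.associator_mul_left, hn A m,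
          (hm.commute_associator hl hr x y z).eq]
      _ = n * m * A := (hn m A).symm
  rw [sub_mul, this, sub_self]

end IsLeftNuclear

end Associator

theorem stmt_9 {R : Type*} [NonUnitalNonAssocRing R]
    (hl : ∀ x y : R, (x*x)*y = x*(x*y))
    (hr : ∀ x y : R, (y*x)*x = y*(x*x))
    (hna : ∃ a b c : R, (a*b)*c ≠ a*(b*c))
    (hnzd : ∀ n : R, (∀ x y : R, (n*x)*y = n*(x*y)) → n ≠ 0 →
      ∀ t : R, n*t = 0 → t = 0) :
    ∀ m n : R, (∀ x y : R, (m*x)*y = m*(x*y)) →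
      (∀ x y : R, (n*x)*y = n*(x*y)) → m*n = n*m := by
  intro m n hm hn
  obtain ⟨a, b, c, hA⟩ := hna
  have hcomm : IsLeftNuclear (m * n - n * m) :=
    (IsLeftNuclear.mul hm hn).sub (IsLeftNuclear.mul hn hm)
  by_contra hne
  exact sub_ne_zero_of_ne hA <| hnzd _ hcomm (sub_ne_zero_of_ne hne) _
    (IsLeftNuclear.commutator_mul_associator hl hr hm hn a b c)
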